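/- Generalized Fuchs–van de Graaf inequalities: For all d×d complex positive semidefinite matrices A and B, Tr[A] + Tr[B] − 2·Tr[√A·√B] ≤ ‖A − B‖₁ ≤ √( (Tr[A] + Tr[B])² − 4·‖√A·√B‖₁² ). -/

import Mathlib

open scoped ComplexOrder Classical

noncomputable section

namespace QHT

variable {ι : Type*} [Fintype ι] [DecidableEq ι]

/-- The former `Matrix.PosSemidef.sqrt` (removed from Mathlib), spelled out with its old definition. -/
def posSemidefSqrt {A : Matrix ι ι ℂ} (h : A.PosSemidef) : Matrix ι ι ℂ :=
  (h.1.eigenvectorUnitary : Matrix ι ι ℂ) *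
    Matrix.diagonal ((↑) ∘ (Real.sqrt ∘ h.1.eigenvalues)) *
    (star h.1.eigenvectorUnitary : Matrix ι ι ℂ)

/-- Trace norm of a complex matrix: `Tr[√(Aᴴ A)]`. -/
def traceNorm (A : Matrix ι ι ℂ) : ℝ :=
  ((posSemidefSqrt (Matrix.posSemidef_conjTranspose_mul_self A)).trace).re

/-- A quantum state: positive semidefinite with unit trace. -/
def IsState (ρ : Matrix ι ι ℂ) : Prop := ρ.PosSemidef ∧ ρ.trace = 1

/-- Positive semidefinite square root (junk value `0` off the PSD matrices). -/
def matSqrt (A : Matrix ι ι ℂ) : Matrix ι ι ℂ :=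
  if h : A.PosSemidef then posSemidefSqrt h else 0

/-- Real power of a Hermitian matrix, applying `x ↦ x ^ s` to positive
eigenvalues and `x ↦ 0` to the remaining ones (so `A ^ 0` is the support
projection); junk value `0` off the Hermitian matrices. -/
def matRpow (A : Matrix ι ι ℂ) (s : ℝ) : Matrix ι ι ℂ :=
  if h : A.IsHermitian then
    (h.eigenvectorUnitary : Matrix ι ι ℂ) *
      Matrix.diagonal (fun i =>
        ((if 0 < h.eigenvalues i then (h.eigenvalues i) ^ s else 0 : ℝ) : ℂ)) *
      (star (h.eigenvectorUnitary : Matrix ι ι ℂ))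
  else 0

/-- Fidelity `F(ρ,σ) = ‖√ρ √σ‖₁²`. -/
def Fid (ρ σ : Matrix ι ι ℂ) : ℝ := (traceNorm (matSqrt ρ * matSqrt σ)) ^ 2

/-- Holevo fidelity `F_H(ρ,σ) = (Tr[√ρ √σ])²`. -/
def FidH (ρ σ : Matrix ι ι ℂ) : ℝ := (((matSqrt ρ * matSqrt σ).trace).re) ^ 2

/-- `Q_s(A‖B) = Tr[A^s B^{1-s}]`. -/
def Qs (s : ℝ) (A B : Matrix ι ι ℂ) : ℝ := ((matRpow A s * matRpow B (1 - s)).trace).re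

/-- `Q_min(A‖B) = min_{s ∈ [0,1]} Q_s(A‖B)`. -/
def Qmin (A B : Matrix ι ι ℂ) : ℝ :=
  sInf { x : ℝ | ∃ s ∈ Set.Icc (0 : ℝ) 1, x = Qs s A B }

/-- Bures distance. -/
def dB (ρ σ : Matrix ι ι ℂ) : ℝ := Real.sqrt (2 * (1 - Real.sqrt (Fid ρ σ)))

/-- Quantum Hellinger distance. -/
def dH (ρ σ : Matrix ι ι ℂ) : ℝ := Real.sqrt (2 * (1 - Real.sqrt (FidH ρ σ)))

/-- `n`-fold Kronecker (tensor) power of a matrix. -/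
def tensorPow {d : ℕ} (A : Matrix (Fin d) (Fin d) ℂ) (n : ℕ) :
    Matrix (Fin n → Fin d) (Fin n → Fin d) ℂ :=
  Matrix.of fun i j => ∏ k, A (i k) (j k)

/-- Optimal error probability of symmetric binary quantum hypothesis testing
with `n` copies. -/
def pErr {d : ℕ} (p : ℝ) (ρ : Matrix (Fin d) (Fin d) ℂ) (q : ℝ)
    (σ : Matrix (Fin d) (Fin d) ℂ) (n : ℕ) : ℝ :=
  sInf { x : ℝ | ∃ Λ : Matrix (Fin n → Fin d) (Fin n → Fin d) ℂ,
    Λ.PosSemidef ∧ (1 - Λ).PosSemidef ∧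
    x = p * (((1 - Λ) * tensorPow ρ n).trace).re + q * ((Λ * tensorPow σ n).trace).re }

/-- Sample complexity of symmetric binary quantum hypothesis testing. -/
def sampleComplexity {d : ℕ} (p : ℝ) (ρ : Matrix (Fin d) (Fin d) ℂ) (q : ℝ)
    (σ : Matrix (Fin d) (Fin d) ℂ) (ε : ℝ) : ℕ :=
  sInf { n : ℕ | 1 ≤ n ∧ pErr p ρ q σ n ≤ ε }

/-- Optimal type II error `β_ε(ρ‖σ)` of asymmetric hypothesis testing. -/
def betaErr (ε : ℝ) (ρ σ : Matrix ι ι ℂ) : ℝ :=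
  sInf { x : ℝ | ∃ Λ : Matrix ι ι ℂ, Λ.PosSemidef ∧ (1 - Λ).PosSemidef ∧
    (((1 - Λ) * ρ).trace).re ≤ ε ∧ x = ((Λ * σ).trace).re }

/-- Sample complexity of asymmetric binary quantum hypothesis testing. -/
def sampleComplexityAsym {d : ℕ} (ρ σ : Matrix (Fin d) (Fin d) ℂ) (ε δ : ℝ) : ℕ :=
  sInf { n : ℕ | 1 ≤ n ∧ betaErr ε (tensorPow ρ n) (tensorPow σ n) ≤ δ }

/-- Petz–Rényi divergence `D_α(ρ‖σ)`. -/
def petzRenyi (α : ℝ) (ρ σ : Matrix ι ι ℂ) : ℝ :=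
  (1 / (α - 1)) * Real.log (((matRpow ρ α * matRpow σ (1 - α)).trace).re)

/-- Sandwiched Rényi divergence `D̃_α(ρ‖σ)`. -/
def sandwichedRenyi (α : ℝ) (ρ σ : Matrix ι ι ℂ) : ℝ :=
  (1 / (α - 1)) * Real.log
    (((matRpow (matRpow σ ((1 - α) / (2 * α)) * ρ * matRpow σ ((1 - α) / (2 * α))) α).trace).re)

/-!
Write `P = √A`, `Q = √B`, and for Hermitian `X` let `W = sign X`, so that `XW = WX = |X|`,
`-1 ≤ W ≤ 1` and hence `Tr[XW] = ‖X‖₁ ≥ Tr[XW']` for every `-1 ≤ W' ≤ 1`.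

Lower bound (Powers–Størmer): `2(A - B) = (P + Q)(P - Q) + (P - Q)(P + Q)`, so for
`W = sign (P - Q)` we get `‖A - B‖₁ ≥ Tr[(A - B)W] = Tr[(P + Q)|P - Q|] ≥ Tr[(P - Q)²]`,
the last step because `-(P + Q) ≤ P - Q ≤ P + Q`.

Upper bound: for `W = sign (A - B)` and a contraction `V` with `Tr[V PQ] = ‖PQ‖₁` (polar
decomposition), `2‖PQ‖₁ = Tr[V P(1 - W)Q] + Tr[V P(1 + W)Q]`. Cauchy–Schwarz for the inner
products weighted by `1 ∓ W` bounds the two terms by `√((a ∓ α)(b ∓ β))`, where `a = Tr A`,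
`b = Tr B`, `α = Tr[AW]`, `β = Tr[BW]`, while `‖A - B‖₁ = α - β`; AM-GM finishes.
-/

open Matrix
open scoped MatrixOrder

lemma posSemidefSqrt_eq_cfcSqrt {A : Matrix ι ι ℂ} (h : A.PosSemidef) :
    posSemidefSqrt h = CFC.sqrt A := by
  rw [CFC.sqrt_eq_real_sqrt A h.nonneg, cfcₙ_eq_cfc, h.1.cfc_eq]
  rfl

lemma matSqrt_of_posSemidef {A : Matrix ι ι ℂ} (h : A.PosSemidef) : matSqrt A = CFC.sqrt A := by
  rw [matSqrt, dif_pos h, posSemidefSqrt_eq_cfcSqrt]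

lemma traceNorm_eq_re_trace_abs (M : Matrix ι ι ℂ) : traceNorm M = (CFC.abs M).trace.re := by
  rw [traceNorm, posSemidefSqrt_eq_cfcSqrt, CFC.abs, star_eq_conjTranspose]

omit [DecidableEq ι] in
lemma re_trace_nonneg {A : Matrix ι ι ℂ} (hA : 0 ≤ A) : 0 ≤ A.trace.re :=
  (Complex.nonneg_iff.mp hA.posSemidef.trace_nonneg).1

lemma re_trace_mul_nonneg {A B : Matrix ι ι ℂ} (hA : 0 ≤ A) (hB : 0 ≤ B) :
    0 ≤ (A * B).trace.re := by
  rw [← CFC.sqrt_mul_sqrt_self B hB, ← mul_assoc, trace_mul_cycle]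
  exact re_trace_nonneg (conjugate_nonneg_of_nonneg hA (CFC.sqrt_nonneg B))

lemma traceNorm_nonneg (M : Matrix ι ι ℂ) : 0 ≤ traceNorm M := by
  rw [traceNorm_eq_re_trace_abs]
  exact re_trace_nonneg (CFC.abs_nonneg M)

lemma continuousOn_spectrum (f : ℝ → ℝ) (A : Matrix ι ι ℂ) : ContinuousOn f (spectrum ℝ A) :=
  A.finite_real_spectrum.continuousOn f

lemma mul_sign_eq_abs (x : ℝ) : x * Real.sign x = |x| := by
  rcases lt_trichotomy x 0 with h | rfl | h
  · rw [Real.sign_of_neg h, abs_of_neg h, mul_neg_one]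
  · simp
  · rw [Real.sign_of_pos h, abs_of_pos h, mul_one]

lemma exists_mul_eq_abs {X : Matrix ι ι ℂ} (hX : IsSelfAdjoint X) :
    ∃ W : Matrix ι ι ℂ, -1 ≤ W ∧ W ≤ 1 ∧ X * W = CFC.abs X ∧ W * X = CFC.abs X := by
  have hsign : ∀ x : ℝ, -1 ≤ Real.sign x ∧ Real.sign x ≤ 1 := fun x => by
    rcases Real.sign_apply_eq x with h | h | h <;> rw [h] <;> norm_num
  refine ⟨cfc Real.sign X, ?_, ?_, ?_, ?_⟩
  · simpa using algebraMap_le_cfc Real.sign (-1) X (fun x _ => (hsign x).1)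
      (continuousOn_spectrum _ _)
  · exact cfc_le_one Real.sign X fun x _ => (hsign x).2
  · conv_lhs => arg 1; rw [← cfc_id' ℝ X]
    rw [← cfc_mul _ _ X (continuousOn_spectrum _ _) (continuousOn_spectrum _ _),
      CFC.abs_eq_cfc_norm X]
    exact cfc_congr fun x _ => mul_sign_eq_abs x
  · conv_lhs => arg 2; rw [← cfc_id' ℝ X]
    rw [← cfc_mul _ _ X (continuousOn_spectrum _ _) (continuousOn_spectrum _ _),
      CFC.abs_eq_cfc_norm X]
    exact cfc_congr fun x _ => by rw [mul_comm]; exact mul_sign_eq_abs x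

lemma abs_add_self_nonneg {X : Matrix ι ι ℂ} (hX : IsSelfAdjoint X) : 0 ≤ CFC.abs X + X := by
  rw [CFC.abs_add_self X hX]
  exact nsmul_nonneg (CFC.posPart_nonneg X) 2

lemma abs_sub_self_nonneg {X : Matrix ι ι ℂ} (hX : IsSelfAdjoint X) : 0 ≤ CFC.abs X - X := by
  rw [CFC.abs_sub_self X hX]
  exact nsmul_nonneg (CFC.negPart_nonneg X) 2

lemma re_trace_mul_le_re_trace_mul_abs {X S T : Matrix ι ι ℂ} (hX : IsSelfAdjoint X)
    (hTS : T ≤ S) (hST : -S ≤ T) : (T * X).trace.re ≤ (S * CFC.abs X).trace.re := by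
  have key : (S * CFC.abs X - T * X) + (S * CFC.abs X - T * X) =
      (S - T) * (CFC.abs X + X) + (T + S) * (CFC.abs X - X) := by noncomm_ring
  have h := add_nonneg (re_trace_mul_nonneg (sub_nonneg.mpr hTS) (abs_add_self_nonneg hX))
    (re_trace_mul_nonneg (neg_le_iff_add_nonneg.mp hST) (abs_sub_self_nonneg hX))
  rw [← Complex.add_re, ← trace_add, ← key, trace_add, Complex.add_re, trace_sub,
    Complex.sub_re] at h
  linarith

lemma re_trace_mul_le_traceNorm {X W : Matrix ι ι ℂ} (hX : IsSelfAdjoint X) (hW : -1 ≤ W)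
    (hW' : W ≤ 1) : (X * W).trace.re ≤ traceNorm X := by
  simpa [trace_mul_comm X, traceNorm_eq_re_trace_abs] using
    re_trace_mul_le_re_trace_mul_abs hX hW' hW

omit [DecidableEq ι] in
lemma re_trace_mul_mul_conjTranspose_le {K : Matrix ι ι ℂ} (hK : 0 ≤ K) (X Y : Matrix ι ι ℂ) :
    (Y * K * Xᴴ).trace.re ≤ √(X * K * Xᴴ).trace.re * √(Y * K * Yᴴ).trace.re := by
  let _ := K.toMatrixSeminormedAddCommGroup hK.posSemidef
  let _ := K.toMatrixInnerProductSpace hK.posSemidef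
  exact re_inner_le_norm (𝕜 := ℂ) X Y

lemma re_trace_mul_conjTranspose_mul_le {K V : Matrix ι ι ℂ} (hK : 0 ≤ K) (hV : V * Vᴴ ≤ 1)
    (X Y : Matrix ι ι ℂ) :
    (V * Xᴴ * K * Y).trace.re ≤ √(Xᴴ * K * X).trace.re * √(Yᴴ * K * Y).trace.re := by
  have hY : (Vᴴ * Yᴴ * K * Y * V).trace.re ≤ (Yᴴ * K * Y).trace.re := by
    have h := re_trace_mul_nonneg (star_left_conjugate_nonneg hK Y) (sub_nonneg.mpr hV)
    rw [mul_sub, mul_one, trace_sub, Complex.sub_re, sub_nonneg, ← mul_assoc,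
      trace_mul_comm] at h
    simpa only [mul_assoc, star_eq_conjTranspose] using h
  have hCS := re_trace_mul_mul_conjTranspose_le hK (Vᴴ * Yᴴ) Xᴴ
  rw [conjTranspose_mul, conjTranspose_conjTranspose, ← mul_assoc, trace_mul_comm] at hCS
  rw [mul_comm]
  calc (V * Xᴴ * K * Y).trace.re ≤ _ := by
        simpa only [mul_assoc, conjTranspose_conjTranspose] using hCS
    _ ≤ _ := mul_le_mul_of_nonneg_right (Real.sqrt_le_sqrt hY) (Real.sqrt_nonneg _)

lemma exists_re_trace_mul_eq_traceNorm (M : Matrix ι ι ℂ) :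
    ∃ V : Matrix ι ι ℂ, V * Vᴴ ≤ 1 ∧ (V * M).trace.re = traceNorm M := by
  set N := Mᴴ * M
  have hN : 0 ≤ N := (posSemidef_conjTranspose_mul_self M).nonneg
  -- `C` inverts `√N` on the support of `N` (using `(√0)⁻¹ = 0`), so `C Mᴴ` is the adjoint of the
  -- partial isometry in the polar decomposition of `M`.
  set C := cfc (fun x : ℝ => (√x)⁻¹) N
  have hC : Cᴴ = C := (cfc_predicate _ N : IsSelfAdjoint C)
  have hCN : C * N = CFC.sqrt N := by
    conv_lhs => arg 2; rw [← cfc_id' ℝ N]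
    rw [← cfc_mul _ _ N (continuousOn_spectrum _ _) (continuousOn_spectrum _ _),
      CFC.sqrt_eq_real_sqrt N hN, cfcₙ_eq_cfc]
    exact cfc_congr fun x _ => by rw [inv_mul_eq_div, Real.div_sqrt]
  refine ⟨C * Mᴴ, ?_, ?_⟩
  · have h : C * Mᴴ * (C * Mᴴ)ᴴ = C * N * C := by
      rw [conjTranspose_mul, conjTranspose_conjTranspose, hC]
      simp only [N, mul_assoc]
    rw [h, hCN, CFC.sqrt_eq_real_sqrt N hN, cfcₙ_eq_cfc,
      ← cfc_mul _ _ N (continuousOn_spectrum _ _) (continuousOn_spectrum _ _)]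
    exact cfc_le_one _ N fun x _ => mul_inv_le_one
  · rw [mul_assoc, hCN, traceNorm_eq_re_trace_abs, CFC.abs, star_eq_conjTranspose]

lemma re_trace_sub_mul_sub_le_traceNorm {P Q : Matrix ι ι ℂ} (hP : 0 ≤ P) (hQ : 0 ≤ Q) :
    ((P - Q) * (P - Q)).trace.re ≤ traceNorm (P * P - Q * Q) := by
  have hR : IsSelfAdjoint (P - Q) := hP.isSelfAdjoint.sub hQ.isSelfAdjoint
  have hX : IsSelfAdjoint (P * P - Q * Q) :=
    hP.isSelfAdjoint.mul_self_nonneg.isSelfAdjoint.sub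
      hQ.isSelfAdjoint.mul_self_nonneg.isSelfAdjoint
  obtain ⟨W, hW, hW', hRW, hWR⟩ := exists_mul_eq_abs hR
  have hRS : P - Q ≤ P + Q :=
    sub_nonneg.mp (by simpa [sub_sub_sub_cancel_left] using add_nonneg hQ hQ)
  have hSR : -(P + Q) ≤ P - Q := neg_le_iff_add_nonneg.mpr (by simpa using add_nonneg hP hP)
  have htrace : ((P * P - Q * Q) * W).trace.re = ((P + Q) * CFC.abs (P - Q)).trace.re := by
    have key : (P * P - Q * Q) * W + (P * P - Q * Q) * W =
        (P + Q) * ((P - Q) * W) + (P - Q) * ((P + Q) * W) := by noncomm_ring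
    have h := congrArg (fun M => M.trace.re) key
    simp only [trace_add, Complex.add_re] at h
    rw [trace_mul_comm (P - Q), mul_assoc, hWR, hRW] at h
    linarith
  calc ((P - Q) * (P - Q)).trace.re ≤ ((P + Q) * CFC.abs (P - Q)).trace.re :=
        re_trace_mul_le_re_trace_mul_abs hR hRS hSR
    _ = ((P * P - Q * Q) * W).trace.re := htrace.symm
    _ ≤ traceNorm (P * P - Q * Q) := re_trace_mul_le_traceNorm hX hW hW'

/-- `(a + b)² - (α - β)² = ((a - α) + (b + β)) ((a + α) + (b - β))`, which dominates
`(√((a - α)(b - β)) + √((a + α)(b + β)))²` by AM-GM. -/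
lemma sub_le_sqrt_of_two_mul_le {a b α β c : ℝ} (h₁ : 0 ≤ a - α) (h₂ : 0 ≤ a + α)
    (h₃ : 0 ≤ b - β) (h₄ : 0 ≤ b + β) (hc : 0 ≤ c)
    (h : 2 * c ≤ √(a - α) * √(b - β) + √(a + α) * √(b + β)) :
    α - β ≤ √((a + b) ^ 2 - 4 * c ^ 2) := by
  refine (le_abs_self _).trans (Real.abs_le_sqrt ?_)
  have hsq := pow_le_pow_left₀ (by positivity) h 2
  have amgm := two_mul_le_add_sq (√(a - α) * √(a + α)) (√(b - β) * √(b + β))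
  simp only [add_sq, mul_pow, Real.sq_sqrt h₁, Real.sq_sqrt h₂, Real.sq_sqrt h₃,
    Real.sq_sqrt h₄] at hsq amgm
  linarith

lemma traceNorm_mul_self_sub_le {P Q : Matrix ι ι ℂ} (hP : 0 ≤ P) (hQ : 0 ≤ Q) :
    traceNorm (P * P - Q * Q) ≤
      √(((P * P).trace.re + (Q * Q).trace.re) ^ 2 - 4 * traceNorm (P * Q) ^ 2) := by
  have hX : IsSelfAdjoint (P * P - Q * Q) :=
    hP.isSelfAdjoint.mul_self_nonneg.isSelfAdjoint.sub
      hQ.isSelfAdjoint.mul_self_nonneg.isSelfAdjoint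
  obtain ⟨W, hW, hW', hXW, -⟩ := exists_mul_eq_abs hX
  obtain ⟨V, hV, hVPQ⟩ := exists_re_trace_mul_eq_traceNorm (P * Q)
  have hK₁ : 0 ≤ 1 - W := sub_nonneg.mpr hW'
  have hK₂ : 0 ≤ 1 + W := by simpa [add_comm] using neg_le_iff_add_nonneg.mp hW
  have hCS₁ := re_trace_mul_conjTranspose_mul_le hK₁ hV P Q
  have hCS₂ := re_trace_mul_conjTranspose_mul_le hK₂ hV P Q
  have hweight₁ : ∀ N : Matrix ι ι ℂ,
      (N * (1 - W) * N).trace.re = (N * N).trace.re - (N * N * W).trace.re := by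
    intro N
    rw [mul_sub, sub_mul, mul_one, trace_sub, trace_mul_cycle N W N, Complex.sub_re]
  have hweight₂ : ∀ N : Matrix ι ι ℂ,
      (N * (1 + W) * N).trace.re = (N * N).trace.re + (N * N * W).trace.re := by
    intro N
    rw [mul_add, add_mul, mul_one, trace_add, trace_mul_cycle N W N, Complex.add_re]
  have hsum : (V * P * (1 - W) * Q).trace.re + (V * P * (1 + W) * Q).trace.re =
      2 * traceNorm (P * Q) := by
    rw [← hVPQ, ← Complex.add_re, ← trace_add, two_mul, ← Complex.add_re, ← trace_add]
    congr 2
    noncomm_ring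
  have htraceNorm :
      traceNorm (P * P - Q * Q) = (P * P * W).trace.re - (Q * Q * W).trace.re := by
    rw [traceNorm_eq_re_trace_abs, ← hXW, sub_mul, trace_sub, Complex.sub_re]
  have hPh : Pᴴ = P := hP.isSelfAdjoint
  have hQh : Qᴴ = Q := hQ.isSelfAdjoint
  rw [hPh, hQh] at hCS₁ hCS₂
  rw [htraceNorm]
  refine sub_le_sqrt_of_two_mul_le ?_ ?_ ?_ ?_ (traceNorm_nonneg _) ?_
  · rw [← hweight₁]; exact re_trace_nonneg (conjugate_nonneg_of_nonneg hK₁ hP)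
  · rw [← hweight₂]; exact re_trace_nonneg (conjugate_nonneg_of_nonneg hK₂ hP)
  · rw [← hweight₁]; exact re_trace_nonneg (conjugate_nonneg_of_nonneg hK₁ hQ)
  · rw [← hweight₂]; exact re_trace_nonneg (conjugate_nonneg_of_nonneg hK₂ hQ)
  · rw [← hsum, ← hweight₁, ← hweight₁, ← hweight₂, ← hweight₂]
    exact add_le_add hCS₁ hCS₂

/-- **Generalized Fuchs–van de Graaf inequalities**: for positive semidefinite
`A, B`, `Tr A + Tr B − 2 Tr[√A √B] ≤ ‖A − B‖₁ ≤ √((Tr A + Tr B)² − 4‖√A √B‖₁²)`. -/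
theorem generalized_fuchs_van_de_graaf {ι : Type*} [Fintype ι] [DecidableEq ι]
    (A B : Matrix ι ι ℂ) (hA : A.PosSemidef) (hB : B.PosSemidef) :
    (A.trace).re + (B.trace).re - 2 * ((matSqrt A * matSqrt B).trace).re
        ≤ traceNorm (A - B) ∧
    traceNorm (A - B)
        ≤ Real.sqrt (((A.trace).re + (B.trace).re) ^ 2
            - 4 * (traceNorm (matSqrt A * matSqrt B)) ^ 2) := by
  rw [matSqrt_of_posSemidef hA, matSqrt_of_posSemidef hB]
  set P := CFC.sqrt A
  set Q := CFC.sqrt B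
  have hPP : P * P = A := CFC.sqrt_mul_sqrt_self A hA.nonneg
  have hQQ : Q * Q = B := CFC.sqrt_mul_sqrt_self B hB.nonneg
  have hexpand :
      ((P - Q) * (P - Q)).trace.re = A.trace.re + B.trace.re - 2 * (P * Q).trace.re := by
    rw [← hPP, ← hQQ, sub_mul, mul_sub, mul_sub, trace_sub, trace_sub, trace_sub,
      trace_mul_comm Q P]
    simp only [Complex.sub_re]
    ring
  refine ⟨?_, ?_⟩
  · rw [← hexpand, ← hPP, ← hQQ]
    exact re_trace_sub_mul_sub_le_traceNorm (CFC.sqrt_nonneg A) (CFC.sqrt_nonneg B)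
  · rw [← hPP, ← hQQ]
    exact traceNorm_mul_self_sub_le (CFC.sqrt_nonneg A) (CFC.sqrt_nonneg B)

end QHT

end
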